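/- Let k ≥ 1 be an integer, n > 0 a real, α ∈ (0,1), and 0 < τ⁻ < τ⁺ reals. Then there exist reals 0 < c⁻ < c⁺ satisfying simultaneously G_k(n c⁺/τ⁺) − G_k(n c⁻/τ⁺) = α and G_k(n c⁺/τ⁻) − G_k(n c⁻/τ⁻) = α. -/

import Mathlib

open MeasureTheory ProbabilityTheory

/-- The cumulative distribution function of the chi-squared distribution with `k` degrees of
freedom, i.e. of the Gamma distribution with shape `k/2` and rate `1/2`. -/
noncomputable def chisqCDF (k : ℕ) (x : ℝ) : ℝ :=
  ((gammaMeasure ((k : ℝ) / 2) (1 / 2)) (Set.Iic x)).toReal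

/-!
Let `q` be the inverse of `F = G_k` on `[0, ∞)` and `r = τ⁺ / τ⁻ > 1`. For `u ∈ [0, 1 - α)` the
points `x = q u < y = q (u + α)` satisfy `F y - F x = α`, and the remaining equation becomes
`φ u = α` with `φ u = F (r * q (u + α)) - F (r * q u)`, which is continuous. Since `F (r t) > F t`
for `t > 0`, `φ 0 > α`; and `φ u < α` as soon as `r * q u` passes the quantile `q (1 - α)`, because
then the term subtracted in `φ u` already exceeds `1 - α`. The intermediate value theorem gives `u`,
and `c⁻ = τ⁺ x / n`, `c⁺ = τ⁺ y / n`.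
-/

open Set Filter Topology

theorem Set.BijOn.strictMonoOn_invFunOn {α β : Type*} [LinearOrder α] [Nonempty α] [Preorder β]
    {f : α → β} {s : Set α} {t : Set β} (h : BijOn f s t) (hf : StrictMonoOn f s) :
    StrictMonoOn (Function.invFunOn f s) t := by
  intro u hu v hv huv
  have hinv := h.invOn_invFunOn
  have hmaps := (h.symm hinv.symm).mapsTo
  by_contra hle
  have hvu := hf.monotoneOn (hmaps hv) (hmaps hu) (not_lt.mp hle)
  rw [hinv.2 hu, hinv.2 hv] at hvu
  exact huv.not_ge hvu

theorem StrictMonoOn.continuousOn_Ico_of_image_eq_Ici {α β : Type*} [LinearOrder α]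
    [TopologicalSpace α] [OrderTopology α] [LinearOrder β] [TopologicalSpace β] [OrderTopology β]
    [DenselyOrdered β] {g : α → β} {a b : α} (hg : StrictMonoOn g (Ico a b))
    (himg : g '' Ico a b = Ici (g a)) : ContinuousOn g (Ico a b) := by
  rintro u ⟨hau, hub⟩
  rcases hau.eq_or_lt with rfl | hau
  · refine (hg.continuousWithinAt_right_of_image_mem_nhdsWithin (Ico_mem_nhdsGE hub) ?_).mono
      Ico_subset_Ici_self
    exact himg ▸ self_mem_nhdsWithin
  · refine (hg.continuousAt_of_image_mem_nhds (Ico_mem_nhds hau hub) ?_).continuousWithinAt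
    exact himg ▸ Ici_mem_nhds (hg ⟨le_rfl, hau.trans hub⟩ ⟨hau.le, hub⟩ hau)

section CDF

variable (μ : Measure ℝ) [IsProbabilityMeasure μ]

lemma continuousAt_cdf {x : ℝ} (hx : μ {x} = 0) : ContinuousAt (cdf μ) x := by
  rw [(monotone_cdf μ).continuousAt_iff_leftLim_eq_rightLim, (cdf μ).rightLim_eq]
  rw [← measure_cdf μ, StieltjesFunction.measure_singleton, ENNReal.ofReal_eq_zero,
    sub_nonpos] at hx
  exact le_antisymm ((monotone_cdf μ).leftLim_le le_rfl) hx

lemma cdf_lt_cdf {x y : ℝ} (h : μ (Ioc x y) ≠ 0) : cdf μ x < cdf μ y := by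
  rwa [← measure_cdf μ, StieltjesFunction.measure_Ioc, ne_eq, ENNReal.ofReal_eq_zero, not_le,
    sub_pos] at h

end CDF

section Gamma

variable {a r : ℝ}

lemma measurable_gammaPDF : Measurable (gammaPDF a r) :=
  (measurable_gammaPDFReal a r).ennreal_ofReal

lemma gammaMeasure_singleton (x : ℝ) : gammaMeasure a r {x} = 0 :=
  withDensity_absolutelyContinuous _ _ Real.volume_singleton

lemma gammaMeasure_Iic_zero : gammaMeasure a r (Iic 0) = 0 := by
  rw [gammaMeasure, withDensity_apply_eq_zero measurable_gammaPDF]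
  refine measure_mono_null (fun z ⟨hz, hz0⟩ => ?_) (measure_singleton 0)
  exact le_antisymm hz0 (not_lt.mp fun hneg => hz (gammaPDF_of_neg hneg))

lemma gammaMeasure_Ioc_ne_zero (ha : 0 < a) (hr : 0 < r) {x y : ℝ} (hx : 0 ≤ x) (hxy : x < y) :
    gammaMeasure a r (Ioc x y) ≠ 0 := by
  rw [gammaMeasure, ne_eq, withDensity_apply_eq_zero measurable_gammaPDF,
    inter_eq_right.mpr fun z hz => ?_]
  · simpa using hxy
  · exact (ENNReal.ofReal_pos.mpr (gammaPDFReal_pos ha hr (hx.trans_lt hz.1))).ne'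

end Gamma

structure IsContinuousCDFOnIci (F : ℝ → ℝ) : Prop where
  continuous : Continuous F
  strictMonoOn : StrictMonoOn F (Ici 0)
  map_zero : F 0 = 0
  tendsto_atTop : Tendsto F atTop (𝓝 1)

namespace IsContinuousCDFOnIci

variable {F : ℝ → ℝ}

lemma bijOn (hF : IsContinuousCDFOnIci F) : BijOn F (Ici 0) (Ico 0 1) := by
  have hm := hF.strictMonoOn
  have hle : ∀ x ∈ Ici (0 : ℝ), F x ≤ 1 := fun x hx =>
    ge_of_tendsto hF.tendsto_atTop <| (eventually_ge_atTop x).mono fun y hy =>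
      hm.monotoneOn hx (mem_Ici.mpr (le_trans hx hy)) hy
  refine ⟨fun x hx => ⟨hF.map_zero ▸ hm.monotoneOn self_mem_Ici hx hx, ?_⟩, hm.injOn, ?_⟩
  · have hx1 : x + 1 ∈ Ici (0 : ℝ) := mem_Ici.mpr (by linarith [mem_Ici.mp hx])
    exact (hm hx hx1 (lt_add_one x)).trans_le (hle _ hx1)
  · rintro u ⟨hu0, hu1⟩
    obtain ⟨b, hub, hb0⟩ :=
      ((hF.tendsto_atTop.eventually (lt_mem_nhds hu1)).and (eventually_ge_atTop 0)).exists
    obtain ⟨x, hx, rfl⟩ := intermediate_value_Icc hb0 hF.continuous.continuousOn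
      ⟨by rwa [hF.map_zero], hub.le⟩
    exact ⟨x, hx.1, rfl⟩

lemma invFunOn_nonneg (hF : IsContinuousCDFOnIci F) {u : ℝ} (hu : u ∈ Ico 0 1) :
    0 ≤ Function.invFunOn F (Ici 0) u :=
  Function.invFunOn_mem (hF.bijOn.surjOn hu)

lemma apply_invFunOn (hF : IsContinuousCDFOnIci F) {u : ℝ} (hu : u ∈ Ico 0 1) :
    F (Function.invFunOn F (Ici 0) u) = u :=
  Function.invFunOn_eq (hF.bijOn.surjOn hu)

lemma invFunOn_apply (hF : IsContinuousCDFOnIci F) {x : ℝ} (hx : 0 ≤ x) :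
    Function.invFunOn F (Ici 0) (F x) = x :=
  hF.strictMonoOn.injOn.leftInvOn_invFunOn hx

lemma invFunOn_zero (hF : IsContinuousCDFOnIci F) : Function.invFunOn F (Ici 0) 0 = 0 := by
  simpa only [hF.map_zero] using hF.invFunOn_apply le_rfl

lemma invFunOn_pos (hF : IsContinuousCDFOnIci F) {u : ℝ} (hu : u ∈ Ioo 0 1) :
    0 < Function.invFunOn F (Ici 0) u := by
  refine (hF.invFunOn_nonneg (Ioo_subset_Ico_self hu)).lt_of_ne fun h => hu.1.ne ?_
  rw [← hF.apply_invFunOn (Ioo_subset_Ico_self hu), ← h, hF.map_zero]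

lemma continuousOn_invFunOn (hF : IsContinuousCDFOnIci F) :
    ContinuousOn (Function.invFunOn F (Ici 0)) (Ico 0 1) := by
  refine (hF.bijOn.strictMonoOn_invFunOn hF.strictMonoOn).continuousOn_Ico_of_image_eq_Ici ?_
  rw [(hF.bijOn.symm hF.bijOn.invOn_invFunOn.symm).image_eq, hF.invFunOn_zero]

lemma apply_lt_apply_mul (hF : IsContinuousCDFOnIci F) {r x : ℝ} (hr : 1 < r) (hx : 0 < x) :
    F x < F (r * x) :=
  hF.strictMonoOn hx.le (mem_Ici.mpr (by positivity)) (lt_mul_left hx hr)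

lemma exists_scaled_increment_lt (hF : IsContinuousCDFOnIci F) {r α : ℝ} (hr : 1 < r)
    (hα : α ∈ Ioo 0 1) : ∃ u ∈ Ico 0 (1 - α),
      F (r * Function.invFunOn F (Ici 0) (u + α)) - F (r * Function.invFunOn F (Ici 0) u) < α := by
  obtain ⟨hα0, hα1⟩ := hα
  have h1α : 1 - α ∈ Ioo (0 : ℝ) 1 := ⟨by linarith, by linarith⟩
  have hFq := hF.apply_invFunOn (Ioo_subset_Ico_self h1α)
  have hq := hF.invFunOn_pos h1α
  obtain ⟨x, hxr, hx⟩ := exists_between (div_lt_self hq hr)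
  have hx0 : 0 < x := (div_pos hq (zero_lt_one.trans hr)).trans hxr
  have hFx : F x < 1 - α := hFq ▸ hF.strictMonoOn hx0.le hq.le hx
  refine ⟨F x, ⟨(hF.bijOn.mapsTo hx0.le).1, hFx⟩, ?_⟩
  have hmem : F x + α ∈ Ico (0 : ℝ) 1 := ⟨by linarith [(hF.bijOn.mapsTo hx0.le).1], by linarith⟩
  have hlt1 : F (r * Function.invFunOn F (Ici 0) (F x + α)) < 1 :=
    (hF.bijOn.mapsTo (mem_Ici.mpr (by positivity [hF.invFunOn_nonneg hmem]))).2
  have hgt : 1 - α < F (r * x) := hFq ▸ hF.strictMonoOn hq.le (mem_Ici.mpr (by positivity))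
    ((div_lt_iff₀' (zero_lt_one.trans hr)).mp hxr)
  rw [hF.invFunOn_apply hx0.le]
  linarith

theorem exists_increment_eq_of_scale (hF : IsContinuousCDFOnIci F) {r α : ℝ} (hr : 1 < r)
    (hα : α ∈ Ioo 0 1) : ∃ x y, 0 < x ∧ x < y ∧ F y - F x = α ∧ F (r * y) - F (r * x) = α := by
  set q := Function.invFunOn F (Ici 0)
  obtain ⟨u₂, hu₂, hφu₂⟩ := hF.exists_scaled_increment_lt hr hα
  have hdom : ∀ u ∈ Icc 0 u₂, u ∈ Ico (0 : ℝ) 1 ∧ u + α ∈ Ico (0 : ℝ) 1 := fun u hu =>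
    ⟨⟨hu.1, by linarith [hu.2, hu₂.2, hα.1]⟩, ⟨by linarith [hu.1, hα.1], by linarith [hu.2, hu₂.2]⟩⟩
  have hφc : ContinuousOn (fun u => F (r * q (u + α)) - F (r * q u)) (Icc 0 u₂) :=
    (hF.continuous.comp_continuousOn (continuousOn_const.mul (hF.continuousOn_invFunOn.comp
      (continuous_add_const α).continuousOn fun u hu => (hdom u hu).2))).sub
      (hF.continuous.comp_continuousOn
        (continuousOn_const.mul (hF.continuousOn_invFunOn.mono fun u hu => (hdom u hu).1)))
  have hφ0 : α < F (r * q (0 + α)) - F (r * q 0) := by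
    have hq0 : q 0 = 0 := hF.invFunOn_zero
    have h := hF.apply_lt_apply_mul hr (hF.invFunOn_pos hα)
    rw [hF.apply_invFunOn ⟨hα.1.le, hα.2⟩] at h
    rwa [zero_add, hq0, mul_zero, hF.map_zero, sub_zero]
  obtain ⟨u, hu, hφu⟩ := intermediate_value_Icc' hu₂.1 hφc ⟨hφu₂.le, hφ0.le⟩
  have hu0 : 0 < u := hu.1.lt_of_ne fun h => hφ0.ne' (h ▸ hφu)
  obtain ⟨hu_mem, huα_mem⟩ := hdom u hu
  refine ⟨q u, q (u + α), hF.invFunOn_pos ⟨hu0, hu_mem.2⟩,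
    hF.bijOn.strictMonoOn_invFunOn hF.strictMonoOn hu_mem huα_mem (lt_add_of_pos_right u hα.1),
    ?_, hφu⟩
  rw [hF.apply_invFunOn hu_mem, hF.apply_invFunOn huα_mem, add_sub_cancel_left]

end IsContinuousCDFOnIci

section ChiSquared

variable {k : ℕ}

lemma isProbabilityMeasure_chisq (hk : 1 ≤ k) :
    IsProbabilityMeasure (gammaMeasure ((k : ℝ) / 2) (1 / 2)) :=
  isProbabilityMeasure_gammaMeasure (div_pos (Nat.cast_pos.mpr hk) two_pos) one_half_pos

lemma chisqCDF_eq_cdf (hk : 1 ≤ k) : chisqCDF k = cdf (gammaMeasure ((k : ℝ) / 2) (1 / 2)) := by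
  have := isProbabilityMeasure_chisq hk
  ext x
  rw [chisqCDF, cdf_eq_real, measureReal_def]

lemma isContinuousCDFOnIci_chisqCDF (hk : 1 ≤ k) : IsContinuousCDFOnIci (chisqCDF k) := by
  have := isProbabilityMeasure_chisq hk
  refine ⟨?_, ?_, by simp [chisqCDF, gammaMeasure_Iic_zero], ?_⟩ <;> rw [chisqCDF_eq_cdf hk]
  · exact continuous_iff_continuousAt.2 fun x => continuousAt_cdf _ (gammaMeasure_singleton x)
  · exact fun x hx y _ hxy => cdf_lt_cdf _
      (gammaMeasure_Ioc_ne_zero (div_pos (Nat.cast_pos.mpr hk) two_pos) one_half_pos hx hxy)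
  · exact tendsto_cdf_atTop _

end ChiSquared

/-- **Solvability of the ABC⋆ calibration equations for the scaled χ² equivalence test.**
For every `k ≥ 1`, `n > 0`, `α ∈ (0,1)` and tolerances `0 < τ⁻ < τ⁺` there exist
`0 < c⁻ < c⁺` such that the power at both tolerance boundaries equals `α`:
`G_k(n c⁺/τ⁺) − G_k(n c⁻/τ⁺) = α` and `G_k(n c⁺/τ⁻) − G_k(n c⁻/τ⁻) = α`. -/
theorem chisq_calibration_solvable
    (k : ℕ) (hk : 1 ≤ k) (n : ℝ) (hn : 0 < n)
    (α : ℝ) (hα : α ∈ Set.Ioo (0 : ℝ) 1)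
    (τm τp : ℝ) (hτm : 0 < τm) (hττ : τm < τp) :
    ∃ cm cp : ℝ, 0 < cm ∧ cm < cp ∧
      chisqCDF k (n * cp / τp) - chisqCDF k (n * cm / τp) = α ∧
      chisqCDF k (n * cp / τm) - chisqCDF k (n * cm / τm) = α := by
  have hτp : 0 < τp := hτm.trans hττ
  obtain ⟨x, y, hx, hxy, hτp_eq, hτm_eq⟩ :=
    (isContinuousCDFOnIci_chisqCDF hk).exists_increment_eq_of_scale ((one_lt_div hτm).mpr hττ) hα
  have hscale : ∀ z τ, τ ≠ 0 → n * (τp * z / n) / τ = τp / τ * z := fun z τ hτ => by field_simp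
  refine ⟨τp * x / n, τp * y / n, by positivity, by gcongr, ?_, ?_⟩
  · rwa [hscale _ _ hτp.ne', hscale _ _ hτp.ne', div_self hτp.ne', one_mul, one_mul]
  · rwa [hscale _ _ hτm.ne', hscale _ _ hτm.ne']
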